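/- Fix integers K ≥ 2, d ≥ 1, a real η with 0 < η < 1, set ρ = (1−η)/(K−1), and fix a real p ∈ [0,1]. In the development-set model with Kd labeled examples (d per class), if the per-class strict-majority probability Pl = P(c_{1,1} > c_{1,j} for all j ≠ 1) satisfies Pl^K ≥ p, then the probability that the identity is the unique bijection g maximizing the assignment score L_g = ∑_k c_{g(k),k} is at least p. -/

import Mathlib

/-!
If every class `k` is the strict plurality among the clusters its own `d` examples are sent to
(`c k j < c k k` for `j ≠ k`), then every bijection `g ≠ 1` loses score, termwise
`c (g k) k ≤ c (g k) (g k)` with strict inequality where `g k ≠ k`. These `K` events depend on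
disjoint blocks of the independent assignments, hence are independent, and relabelling by the
transposition of `k` and `0` carries the law of block `k` to that of block `0`, so each event has
probability `Pl`. The identity is therefore the unique maximiser with probability at least `Pl ^ K`.
-/

open Finset MeasureTheory ProbabilityTheory

section StrictPlurality

variable {κ α β : Type*} [Fintype κ]

def labelCount [DecidableEq α] (u : κ → α) (a : α) : ℕ := #{i | u i = a}

def IsStrictPlurality [DecidableEq α] (u : κ → α) (a : α) : Prop :=
  ∀ b, b ≠ a → labelCount u b < labelCount u a

lemma labelCount_equiv_comp [DecidableEq α] [DecidableEq β] (σ : α ≃ β) (u : κ → α) (a : α) :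
    labelCount (σ ∘ u) (σ a) = labelCount u a := by
  simp only [labelCount, Function.comp_apply, EmbeddingLike.apply_eq_iff_eq]

lemma isStrictPlurality_equiv_comp [DecidableEq α] [DecidableEq β] (σ : α ≃ β) (u : κ → α)
    (a : α) : IsStrictPlurality (σ ∘ u) (σ a) ↔ IsStrictPlurality u a := by
  rw [IsStrictPlurality, σ.symm.forall_congr_left]
  simp only [Equiv.symm_symm, labelCount_equiv_comp, ne_eq, EmbeddingLike.apply_eq_iff_eq,
    IsStrictPlurality]

end StrictPlurality

lemma Equiv.Perm.sum_apply_lt_sum_diag {ι M : Type*} [Fintype ι] [AddCommMonoid M]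
    [PartialOrder M] [IsOrderedCancelAddMonoid M] {s : ι → ι → M}
    (hs : ∀ k j, j ≠ k → s k j < s k k)
    {g : Equiv.Perm ι} (hg : g ≠ 1) :
    ∑ k, s (g k) k < ∑ k, s k k := by
  obtain ⟨k₀, hk₀⟩ : ∃ k, g k ≠ k := by
    by_contra! h
    exact hg (Equiv.ext h)
  rw [← Equiv.sum_comp g fun k => s k k]
  refine Finset.sum_lt_sum (fun k _ => ?_) ⟨k₀, mem_univ _, hs _ _ hk₀.symm⟩
  obtain h | h := eq_or_ne (g k) k
  · rw [h]
  · exact (hs _ _ (Ne.symm h)).le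

namespace ProbabilityTheory

variable {Ω Ω' ι κ γ : Type*} {mΩ : MeasurableSpace Ω} {mΩ' : MeasurableSpace Ω'}
  {P : Measure Ω} {P' : Measure Ω'} [MeasurableSpace γ]

lemma iIndepFun.curry {X : ι × κ → Ω → γ} (mX : ∀ p, Measurable (X p)) (h : iIndepFun X P) :
    iIndepFun (fun i ω j => X (i, j) ω) P := by
  have := h.isProbabilityMeasure
  have _ (p : ι × κ) : IsProbabilityMeasure (P.map (X p)) :=
    Measure.isProbabilityMeasure_map (mX p).aemeasurable
  have hrow i : P.map (fun ω j => X (i, j) ω) = Measure.infinitePi fun j => P.map (X (i, j)) :=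
    (h.precomp (Prod.mk_right_injective i)).map_fun_eq_infinitePi_map fun j => mX (i, j)
  rw [iIndepFun_iff_map_fun_eq_infinitePi_map fun i => measurable_pi_lambda _ fun j => mX (i, j)]
  simp_rw [hrow]
  rw [← Measure.infinitePi_map_curry (fun i j => P.map (X (i, j))),
    ← h.map_fun_eq_infinitePi_map mX, Measure.map_map (by fun_prop) (measurable_pi_lambda _ mX)]
  rfl

lemma identDistrib_of_measure_preimage_singleton [Countable γ] [MeasurableSingletonClass γ]
    {f : Ω → γ} {g : Ω' → γ} (hf : Measurable f) (hg : Measurable g)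
    (h : ∀ a, P (f ⁻¹' {a}) = P' (g ⁻¹' {a})) : IdentDistrib f g P P' where
  aemeasurable_fst := hf.aemeasurable
  aemeasurable_snd := hg.aemeasurable
  map_eq := Measure.ext_iff_singleton.2 fun a => by
    rw [Measure.map_apply hf (measurableSet_singleton a),
      Measure.map_apply hg (measurableSet_singleton a), h]

end ProbabilityTheory

lemma measure_isStrictPlurality_row_eq {α κ Ω : Type*} [Fintype κ] [DecidableEq α] [Finite α]
    [MeasurableSpace α] [DiscreteMeasurableSpace α] {mΩ : MeasurableSpace Ω} {P : Measure Ω}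
    {X : α × κ → Ω → α} (hmeas : ∀ q, Measurable (X q)) (hindep : iIndepFun X P) {η ρ : ℝ}
    (hdist : ∀ a i b, P {ω | X (a, i) ω = b} = ENNReal.ofReal (if b = a then η else ρ))
    (a a' : α) :
    P {ω | IsStrictPlurality (fun i => X (a, i) ω) a} =
      P {ω | IsStrictPlurality (fun i => X (a', i) ω) a'} := by
  set σ := Equiv.swap a' a
  have hrow b : iIndepFun (fun i => X (b, i)) P := hindep.precomp (Prod.mk_right_injective b)
  have hlabel i : IdentDistrib (X (a, i)) (σ ∘ X (a', i)) P P :=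
    identDistrib_of_measure_preimage_singleton (hmeas _) (Measurable.of_discrete.comp (hmeas _))
      fun b => by
        simp only [Set.preimage, Set.mem_singleton_iff, Function.comp_apply, σ,
          Equiv.swap_apply_eq_iff, hdist, Equiv.swap_apply_left]
  have hident :=
    IdentDistrib.pi hlabel (hrow a) ((hrow a').comp (fun _ => σ) fun _ => .of_discrete)
  calc P {ω | IsStrictPlurality (fun i => X (a, i) ω) a}
      = P {ω | IsStrictPlurality (σ ∘ fun i => X (a', i) ω) a} :=
        hident.measure_mem_eq (s := {u | IsStrictPlurality u a}) .of_discrete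
    _ = P {ω | IsStrictPlurality (σ ∘ fun i => X (a', i) ω) (σ a')} := by
        rw [Equiv.swap_apply_left]
    _ = _ := by simp_rw [isStrictPlurality_equiv_comp]

/-- Paper's Theorem 1 (second part): if the per-class strict-majority probability `Pl`
satisfies `Pl ^ K ≥ p`, then a development set of `d` examples per class produces the
correct (identity) cluster-to-class mapping with probability at least `p`. -/
theorem dev_set_size_gives_correct_mapping
    (K d : ℕ) (hK : 2 ≤ K)
    (η : ℝ) (ρ : ℝ) (p : ℝ)
    {Ω : Type} [MeasurableSpace Ω] (P : Measure Ω)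
    (X : Fin K × Fin d → Ω → Fin K)
    (hmeas : ∀ q, Measurable (X q))
    (hindep : iIndepFun X P)
    (hdist : ∀ (k' : Fin K) (i : Fin d) (j : Fin K),
      P {ω | X (k', i) ω = j} = ENNReal.ofReal (if j = k' then η else ρ))
    (c : Fin K → Fin K → Ω → ℕ)
    (hc : ∀ k' j ω, c k' j ω = (univ.filter (fun i => X (k', i) ω = j)).card)
    (L : Equiv.Perm (Fin K) → Ω → ℕ)
    (hL : ∀ g ω, L g ω = ∑ k, c (g k) k ω)
    (Pl : ENNReal)
    (hPl : Pl = P {ω | ∀ j, j ≠ (⟨0, by omega⟩ : Fin K) →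
        c ⟨0, by omega⟩ j ω < c ⟨0, by omega⟩ ⟨0, by omega⟩ ω})
    (hPlp : Pl ^ K ≥ ENNReal.ofReal p) :
    P {ω | ∀ g : Equiv.Perm (Fin K), g ≠ 1 → L g ω < L 1 ω} ≥ ENNReal.ofReal p := by
  set A : Fin K → Set Ω := fun k => {ω | ∀ j, j ≠ k → c k j ω < c k k ω}
  have hA k : A k = (fun ω i => X (k, i) ω) ⁻¹' {u | IsStrictPlurality u k} := by
    ext ω
    simp [A, IsStrictPlurality, labelCount, hc]
  have hPA k : P (A k) = Pl := by
    rw [hPl]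
    change P (A k) = P (A ⟨0, by omega⟩)
    rw [hA, hA]
    exact measure_isStrictPlurality_row_eq hmeas hindep hdist k _
  have hindepA : P (⋂ k, A k) = ∏ k, P (A k) := by
    simp_rw [hA]
    exact (hindep.curry hmeas).meas_iInter fun k => ⟨_, .of_discrete, rfl⟩
  calc ENNReal.ofReal p ≤ Pl ^ K := hPlp
    _ = P (⋂ k, A k) := by simp [hindepA, hPA]
    _ ≤ _ := by
      refine measure_mono fun ω hω g hg => ?_
      rw [hL, hL]
      exact Equiv.Perm.sum_apply_lt_sum_diag (Set.mem_iInter.1 hω) hg
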